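/- For every sum-free set A ⊆ F_5^n with |A| ≥ 28·5^(n-3) and every surjective linear map φ : F_5^n → F_5^2, the function f(P) = |A ∩ φ^{-1}(P)| / 5^(n-3) is fishy. -/

import Mathlib

/-!
Write `A_P = A ∩ φ⁻¹(P)` and `M = 5^(n-3)`; every fibre of `φ` has `5M` points, and `M` is
odd, which settles everything but (F3). For (F3), `A_P ± A_Q` lies in the fibre over
`R = P ± Q` and misses `A_R` because `A` is sum-free. DeVos's e-transform argument gives a
nonempty `S ⊆ A_P ± A_Q` with `|A_P| + |A_Q| ≤ |S| + |H|`, `H` the stabilizer of `S`. Now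
`|H|` divides `|S|`, and, being a power of `5` smaller than the fibre, also `M`; so the room
`|S| + |A_R| ≤ 5M` in the fibre forces `|S| + ⌈|A_R|/M⌉ M + |H| ≤ 6M`.
-/

/-- A function `f : F_5^2 → ℝ≥0` is fishy. -/
def Fishy (f : ZMod 5 × ZMod 5 → ℝ) : Prop :=
  (∀ P, 0 ≤ f P) ∧
  (28 ≤ ∑ P : ZMod 5 × ZMod 5, f P) ∧ (∀ P, f P ≤ 5) ∧
  (∀ X : Finset (ZMod 5 × ZMod 5), ∀ k : ℤ, Odd k → ∑ P ∈ X, f P ≠ (k : ℝ) / 2) ∧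
  (∀ P Q : ZMod 5 × ZMod 5, ∀ ε : ℤ, ε = 1 ∨ ε = -1 →
    0 < f P → 0 < f Q → 0 < f (P + ε • Q) →
    f P + f Q + (⌈f (P + ε • Q)⌉ : ℝ) ≤ 6)

open Finset Pointwise AddAction

section Stabilizer

variable {G : Type*} [AddCommGroup G] [DecidableEq G]

lemma card_stabilizer_dvd_card (s : Finset G) : Nat.card (stabilizer G s) ∣ #s := by
  have h :=
    AddSubgroup.card_add_eq_card_addSubgroup_add_card_quotient (stabilizer G s) (s : Set G)
  rw [← stabilizer_coe_finset, add_stabilizer_self, Nat.card_coe_set_eq,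
    Set.ncard_coe_finset] at h
  rw [← stabilizer_coe_finset]
  exact Dvd.intro _ h.symm

lemma finite_stabilizer {s : Finset G} (hs : s.Nonempty) : Finite (stabilizer G s) := by
  rw [← stabilizer_coe_finset]
  exact (stabilizer_finite (by simpa) s.finite_toSet).to_subtype

lemma stabilizer_le_stabilizer_add (X Y : Finset G) : stabilizer G X ≤ stabilizer G (X + Y) := by
  intro g hg
  rw [mem_stabilizer_finset'] at hg ⊢
  intro z hz
  obtain ⟨x, hx, y, hy, rfl⟩ := mem_add.mp hz
  rw [vadd_eq_add, ← add_assoc]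
  exact add_mem_add (hg hx) hy

lemma card_le_card_stabilizer {X Y : Finset G} (hX : X.Nonempty) {b : G}
    (hY : ∀ y ∈ Y, y - b ∈ stabilizer G X) : #Y ≤ Nat.card (stabilizer G X) := by
  have := finite_stabilizer hX
  rw [← card_vadd_finset (-b) Y, ← Set.ncard_coe_finset, ← SetLike.coe_sort_coe,
    Nat.card_coe_set_eq]
  refine Set.ncard_le_ncard ?_ (Set.toFinite _)
  intro z hz
  obtain ⟨y, hy, rfl⟩ := mem_vadd_finset.mp hz
  simpa [neg_add_eq_sub] using hY y hy

theorem exists_subset_add_card_add_card_le (X Y : Finset G) (hX : X.Nonempty) (hY : Y.Nonempty) :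
    ∃ S ⊆ X + Y, S.Nonempty ∧ #X + #Y ≤ #S + Nat.card (stabilizer G S) := by
  induction hk : #Y using Nat.strong_induction_on generalizing X Y with
  | _ k ih =>
  subst hk
  -- Either some Dyson e-transform shrinks `Y`, or `Y` lies in a coset of the stabilizer of `X`.
  by_cases htrans : ∃ a ∈ X, ∃ b ∈ Y, ¬ Y ⊆ -(a - b) +ᵥ X
  · obtain ⟨a, ha, b, hb, hY⟩ := htrans
    have he := addDysonETransform.card (a - b) (X, Y)
    set e := addDysonETransform (a - b) (X, Y)
    have hbe : b ∈ e.2 := mem_inter.mpr ⟨hb, mem_neg_vadd_finset_iff.mpr (by simpa)⟩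
    have hlt : #e.2 < #Y :=
      card_lt_card (Finset.ssubset_iff_subset_ne.mpr
        ⟨inter_subset_left, fun h => hY (h ▸ inter_subset_right)⟩)
    obtain ⟨S, hS, hSne, hcard⟩ := ih _ hlt e.1 e.2 (hX.mono subset_union_left) ⟨b, hbe⟩ rfl
    refine ⟨S, hS.trans (addDysonETransform.subset _ _), hSne, ?_⟩
    dsimp only at he
    omega
  · push Not at htrans
    obtain ⟨b, hb⟩ := hY
    refine ⟨X + Y, subset_rfl, hX.add ⟨b, hb⟩, ?_⟩
    have hYstab : ∀ y ∈ Y, y - b ∈ stabilizer G X := fun y hy => mem_stabilizer_finset'.mpr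
      fun x hx => by
        have := mem_neg_vadd_finset_iff.mp (htrans x hx b hb hy)
        rwa [vadd_eq_add, show x - b + y = y - b + x by abel] at this
    have := finite_stabilizer (hX.add ⟨b, hb⟩)
    calc #X + #Y ≤ #(X + Y) + Nat.card (stabilizer G X) :=
          add_le_add (card_le_card_add_right ⟨b, hb⟩) (card_le_card_stabilizer hX hYstab)
      _ ≤ #(X + Y) + Nat.card (stabilizer G (X + Y)) :=
          Nat.add_le_add_left (AddSubgroup.card_le_of_le (stabilizer_le_stabilizer_add X Y)) _

end Stabilizer

section Counting

lemma add_le_of_dvd_of_lt {h a b : ℕ} (ha : h ∣ a) (hb : h ∣ b) (hab : a < b) :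
    a + h ≤ b := by
  obtain ⟨i, rfl⟩ := ha
  obtain ⟨j, rfl⟩ := hb
  have : i + 1 ≤ j := Nat.lt_of_mul_lt_mul_left hab
  calc h * i + h = h * (i + 1) := by ring
    _ ≤ h * j := Nat.mul_le_mul_left h this

lemma dvd_pow_of_dvd_pow_of_lt_pow_succ {p h k m : ℕ} (hp : p.Prime) (hdvd : h ∣ p ^ m)
    (hlt : h < p ^ (k + 1)) : h ∣ p ^ k := by
  obtain ⟨j, -, rfl⟩ := (Nat.dvd_prime_pow hp).mp hdvd
  exact pow_dvd_pow p (Nat.lt_succ_iff.mp ((Nat.pow_lt_pow_iff_right hp.one_lt).mp hlt))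

variable {G : Type*} [AddCommGroup G] [DecidableEq G]

theorem card_add_card_add_mul_le {p k m : ℕ} (hp : p.Prime) (hG : Nat.card G = p ^ m)
    {X Y Z F : Finset G} (hX : X.Nonempty) (hY : Y.Nonempty) (hZ : Z.Nonempty)
    (hXY : X + Y ⊆ F) (hZF : Z ⊆ F) (hdisj : Disjoint (X + Y) Z) (hF : #F = p ^ (k + 1))
    {t : ℕ} (ht : t * p ^ k < #Z + p ^ k) : #X + #Y + t * p ^ k ≤ (p + 1) * p ^ k := by
  obtain ⟨S, hS, hSne, hcard⟩ := exists_subset_add_card_add_card_le X Y hX hY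
  set h := Nat.card (stabilizer G S)
  have hSdvd : h ∣ #S := card_stabilizer_dvd_card S
  have hSZ : #S + #Z ≤ p ^ (k + 1) := by
    rw [← hF, ← card_union_of_disjoint (hdisj.mono_left hS)]
    exact card_le_card (union_subset (hS.trans hXY) hZF)
  have hhS : h ≤ #S := Nat.le_of_dvd hSne.card_pos hSdvd
  have hdvd : h ∣ p ^ k := dvd_pow_of_dvd_pow_of_lt_pow_succ hp
    (hG ▸ AddSubgroup.card_addSubgroup_dvd_card _) (by have := hZ.card_pos; omega)
  have hlt : #S + t * p ^ k < (p + 1) * p ^ k := by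
    rw [pow_succ] at hSZ
    nlinarith
  have := add_le_of_dvd_of_lt (dvd_add hSdvd (hdvd.mul_left t)) (hdvd.mul_left (p + 1)) hlt
  omega

end Counting

section Fibers

variable {G G' F : Type*} [AddCommGroup G] [AddCommGroup G'] [DecidableEq G']
  [FunLike F G G'] [AddMonoidHomClass F G G']

lemma card_mul_card_fiber_of_surjective [Fintype G] [Fintype G'] {φ : F}
    (hφ : Function.Surjective φ) (R : G') :
    Fintype.card G' * #{x | φ x = R} = Fintype.card G := by
  have := card_eq_sum_card_fiberwise (s := univ) (t := univ) (f := φ) fun x _ => mem_univ _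
  rwa [sum_congr rfl fun R' _ => AddMonoidHom.card_fiber_eq_of_mem_range φ (hφ R') (hφ R),
    sum_const, card_univ, card_univ, smul_eq_mul, eq_comm] at this

lemma add_zsmul_notMem_of_sumFree {A : Finset G} (hsf : ∀ x ∈ A, ∀ y ∈ A, x + y ∉ A)
    {ε : ℤ} (hε : ε = 1 ∨ ε = -1) {x y : G} (hx : x ∈ A) (hy : y ∈ A) : x + ε • y ∉ A := by
  rcases hε with rfl | rfl
  · simpa using hsf x hx y hy
  · intro hxy
    exact hsf _ hxy y hy (by simpa using hx)

theorem card_fiber_add_card_fiber_add_mul_le [Fintype G] [DecidableEq G] {p k m : ℕ}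
    (hp : p.Prime) (hG : Nat.card G = p ^ m) {A : Finset G}
    (hsf : ∀ x ∈ A, ∀ y ∈ A, x + y ∉ A) (φ : F)
    {P Q : G'} {ε : ℤ} (hε : ε = 1 ∨ ε = -1) (hF : #{x | φ x = P + ε • Q} = p ^ (k + 1))
    (hP : {x ∈ A | φ x = P}.Nonempty) (hQ : {x ∈ A | φ x = Q}.Nonempty)
    (hR : {x ∈ A | φ x = P + ε • Q}.Nonempty) {t : ℕ}
    (ht : t * p ^ k < #{x ∈ A | φ x = P + ε • Q} + p ^ k) :
    #{x ∈ A | φ x = P} + #{x ∈ A | φ x = Q} + t * p ^ k ≤ (p + 1) * p ^ k := by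
  have hinj : Function.Injective (ε • · : G → G) := fun y y' h => by
    rcases hε with rfl | rfl <;> simpa using h
  rw [← card_image_of_injective {x ∈ A | φ x = Q} hinj]
  refine card_add_card_add_mul_le hp hG hP (hQ.image _) hR ?_
    (filter_subset_filter _ (subset_univ A)) ?_ hF ht
  · intro z hz
    obtain ⟨x, hx, _, hy', rfl⟩ := mem_add.mp hz
    obtain ⟨y, hy, rfl⟩ := mem_image.mp hy'
    simp_all [map_zsmul]
  · rw [disjoint_left]
    intro z hz hzA
    obtain ⟨x, hx, _, hy', rfl⟩ := mem_add.mp hz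
    obtain ⟨y, hy, rfl⟩ := mem_image.mp hy'
    exact add_zsmul_notMem_of_sumFree hsf hε (mem_filter.mp hx).1 (mem_filter.mp hy).1
      (mem_filter.mp hzA).1

end Fibers

lemma card_fiber_of_surjective {p k : ℕ} [NeZero p] {F : Type*}
    [FunLike F (Fin (k + 2) → ZMod p) (ZMod p × ZMod p)]
    [AddMonoidHomClass F (Fin (k + 2) → ZMod p) (ZMod p × ZMod p)] {φ : F}
    (hφ : Function.Surjective φ) (R : ZMod p × ZMod p) : #{x | φ x = R} = p ^ k := by
  have := card_mul_card_fiber_of_surjective hφ R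
  simp only [Fintype.card_prod, ZMod.card, Fintype.card_pi, prod_const, card_univ,
    Fintype.card_fin, pow_add] at this
  exact Nat.eq_of_mul_eq_mul_left (Nat.pos_of_neZero (p * p)) (by rw [this]; ring)

lemma natCast_div_ne_odd_div_two {N M : ℕ} (hM : Odd M) {k : ℤ} (hk : Odd k) :
    (N / M : ℝ) ≠ k / 2 := by
  intro h
  have hM0 : (M : ℝ) ≠ 0 := by exact_mod_cast hM.pos.ne'
  have : (2 * N : ℤ) = k * M := by
    field_simp at h
    exact_mod_cast (by linarith : (2 * N : ℝ) = k * M)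
  have hodd : Odd (k * M) := hk.mul (by exact_mod_cast hM)
  rw [← this] at hodd
  exact Int.not_even_iff_odd.mpr hodd (even_two_mul _)

lemma div_add_div_add_ceil_div_le {a b c M N : ℕ} (hM : 0 < M)
    (h : ∀ t : ℕ, t * M < c + M → a + b + t * M ≤ N * M) :
    (a / M : ℝ) + b / M + ⌈(c / M : ℝ)⌉ ≤ N := by
  have hM' : (0 : ℝ) < M := by exact_mod_cast hM
  have hc : (0 : ℝ) ≤ c / M := by positivity
  rw [← natCast_ceil_eq_intCast_ceil hc]
  have hceil : (⌈(c / M : ℝ)⌉₊ * M : ℝ) < c + M := by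
    have := Nat.ceil_lt_add_one hc
    rwa [← lt_div_iff₀ hM', add_div, div_self hM'.ne']
  have := h _ (by exact_mod_cast hceil)
  rw [← add_div, div_add' _ _ _ hM'.ne', div_le_iff₀ hM']
  exact_mod_cast this

lemma three_le_of_mul_pow_le_card {n : ℕ} {A : Finset (Fin n → ZMod 5)}
    (hcard : 28 * 5 ^ (n - 3) ≤ #A) : 3 ≤ n := by
  by_contra hn
  have hA : #A ≤ 5 ^ n := by simpa using card_le_univ A
  have : 5 ^ n ≤ 5 ^ 2 := Nat.pow_le_pow_right (by norm_num) (by omega)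
  rw [Nat.sub_eq_zero_of_le (by omega)] at hcard
  omega

theorem stmt_17 (n : ℕ) (A : Finset (Fin n → ZMod 5))
    (hsf : ∀ x ∈ A, ∀ y ∈ A, x + y ∉ A) (hcard : 28 * 5 ^ (n - 3) ≤ A.card)
    (φ : (Fin n → ZMod 5) →ₗ[ZMod 5] (ZMod 5 × ZMod 5)) (hφ : Function.Surjective φ) :
    Fishy (fun P => ((A.filter (fun x => φ x = P)).card : ℝ) / 5 ^ (n - 3)) := by
  obtain ⟨m, rfl⟩ : ∃ m, n = m + 3 :=
    ⟨n - 3, by have := three_le_of_mul_pow_le_card hcard; omega⟩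
  rw [Nat.add_sub_cancel] at hcard ⊢
  have hM : (0 : ℝ) < 5 ^ m := by positivity
  have hfiber : ∀ R, #{x | φ x = R} = 5 ^ (m + 1) := card_fiber_of_surjective hφ
  have hpos {R : ZMod 5 × ZMod 5} (h : 0 < (#{x ∈ A | φ x = R} : ℝ) / 5 ^ m) :
      {x ∈ A | φ x = R}.Nonempty :=
    card_pos.mp (Nat.cast_pos.mp ((div_pos_iff_of_pos_right hM).mp h))
  refine ⟨fun P => by positivity, ?_, fun P => ?_, fun X k hk => ?_,
    fun P Q ε hε hP hQ hR => ?_⟩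
  · rw [← sum_div, ← Nat.cast_sum, ← card_eq_sum_card_fiberwise fun x _ => mem_univ (φ x),
      le_div_iff₀ hM]
    exact_mod_cast hcard
  · have := (card_le_card (filter_subset_filter (φ · = P) (subset_univ A))).trans (hfiber P).le
    rw [div_le_iff₀ hM, ← pow_succ']
    exact_mod_cast this
  · rw [← sum_div, ← Nat.cast_sum]
    exact_mod_cast natCast_div_ne_odd_div_two (M := 5 ^ m) (Odd.pow (by decide)) hk
  · have := div_add_div_add_ceil_div_le (M := 5 ^ m) (N := 6) (by positivity) fun t ht =>
      card_fiber_add_card_fiber_add_mul_le (by norm_num)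
        (by simp : Nat.card (Fin (m + 3) → ZMod 5) = 5 ^ (m + 3)) hsf φ hε (hfiber _)
        (hpos hP) (hpos hQ) (hpos hR) ht
    exact_mod_cast this
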